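/- Let ρ ∈ (0, 1/4] and p ≥ 2. Define v = e_r + e_{r'} for r ≠ r', S_i = 2I - (2ρ/(1+4ρ)) v_i v_iᵀ where (v_i) ranges over all C(p,2) such vectors, and S̄ = (1/M) Σ_i S_i with M = C(p,2). Then log det S̄ - (1/M) Σ_i log det S_i ≤ 16 ρ². -/

import Mathlib

/-!
Both `S_q = 2I - c v_q v_qᵀ` (with `c = 2ρ/(1+4ρ)` and `|v_q|² = 2`) and, because
`Σ_q v_q v_qᵀ = (p-2)I + 𝟙𝟙ᵀ`, their average `S̄ = aI - b 𝟙𝟙ᵀ` are rank-one perturbations of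
multiples of the identity. The matrix determinant lemma gives
`log det S_q = p log 2 + log (1-c)`, and `log λ ≤ log 2 + λ/2 - 1` applied to the eigenvalues
of `S̄` gives `log det S̄ ≤ p log 2 + tr S̄ / 2 - p = p log 2 - c`, as `tr S̄ = tr S_q = 2p - 2c`.
So the gap is at most `-c - log (1-c) ≤ c²/(1-c)`, and `c ≤ min (2ρ) (1/2)`.
-/

open Matrix Finset

theorem det_smul_one_sub_smul_vecMulVec {n K : Type*} [Fintype n] [DecidableEq n] [Field K]
    {a : K} (ha : a ≠ 0) (c : K) (u : n → K) :
    (a • (1 : Matrix n n K) - c • vecMulVec u u).det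
      = a ^ Fintype.card n * (1 - c / a * (u ⬝ᵥ u)) := by
  have : a • (1 : Matrix n n K) - c • vecMulVec u u
      = a • (1 + vecMulVec (-(c / a) • u) u) := by
    rw [smul_add, smul_vecMulVec, smul_smul, mul_neg, mul_div_cancel₀ c ha,
      neg_smul, sub_eq_add_neg]
  rw [this, det_smul, vecMulVec_eq Unit, det_one_add_replicateCol_mul_replicateRow,
    dotProduct_smul, smul_eq_mul, dotProduct_comm]
  ring

theorem det_two_smul_one_sub_smul_vecMulVec_single_add_single {n K : Type*} [Fintype n]
    [DecidableEq n] [Field K] [NeZero (2 : K)] (c : K) {i j : n} (hij : i ≠ j) :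
    ((2 : K) • (1 : Matrix n n K)
        - c • vecMulVec (Pi.single i 1 + Pi.single j 1) (Pi.single i 1 + Pi.single j 1)).det
      = 2 ^ Fintype.card n * (1 - c) := by
  have hdot : (Pi.single i 1 + Pi.single j 1 : n → K) ⬝ᵥ (Pi.single i 1 + Pi.single j 1) = 2 := by
    simp [dotProduct_add, hij, hij.symm, one_add_one_eq_two]
  rw [det_smul_one_sub_smul_vecMulVec two_ne_zero, hdot, div_mul_cancel₀ c two_ne_zero]

theorem Real.log_le_log_add_div_sub_one {x t : ℝ} (hx : 0 < x) (ht : 0 < t) :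
    Real.log x ≤ Real.log t + x / t - 1 := by
  have := Real.log_le_sub_one_of_pos (div_pos hx ht)
  rw [Real.log_div hx.ne' ht.ne'] at this
  linarith

theorem Real.neg_sub_log_one_sub_le {x : ℝ} (hx : x < 1) :
    -x - Real.log (1 - x) ≤ x ^ 2 / (1 - x) := by
  have h1x : 0 < 1 - x := by linarith
  have := Real.one_sub_inv_le_log_of_pos h1x
  have e : x ^ 2 / (1 - x) = -x - (1 - (1 - x)⁻¹) := by field_simp; ring
  linarith

theorem log_det_smul_one_sub_smul_vecMulVec_le {n : Type*} [Fintype n] [DecidableEq n]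
    [Nonempty n] {a c t : ℝ} (u : n → ℝ) (ha : 0 < a) (hac : 0 < a - c * (u ⬝ᵥ u)) (ht : 0 < t) :
    Real.log (a • (1 : Matrix n n ℝ) - c • vecMulVec u u).det
      ≤ Fintype.card n * (Real.log t - 1) + (Fintype.card n * a - c * (u ⬝ᵥ u)) / t := by
  obtain ⟨k, hcard⟩ : ∃ k, Fintype.card n = k + 1 :=
    Nat.exists_eq_succ_of_ne_zero Fintype.card_ne_zero
  have hdet : (a • (1 : Matrix n n ℝ) - c • vecMulVec u u).det = a ^ k * (a - c * (u ⬝ᵥ u)) := by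
    rw [det_smul_one_sub_smul_vecMulVec ha.ne', hcard]
    field_simp
    ring
  rw [hdet, Real.log_mul (by positivity) hac.ne', Real.log_pow, hcard]
  have h1 := Real.log_le_log_add_div_sub_one ha ht
  have h2 := Real.log_le_log_add_div_sub_one hac ht
  have hk1 := mul_le_mul_of_nonneg_left h1 k.cast_nonneg
  have e : ((k + 1 : ℕ) * a - c * (u ⬝ᵥ u)) / t = k * (a / t) + (a - c * (u ⬝ᵥ u)) / t := by
    push_cast; ring
  rw [e]
  push_cast
  linarith

section Pairs

variable {ι : Type*} [Fintype ι] [LinearOrder ι]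

theorem two_nsmul_sum_filter_lt_add_sum_diag {M : Type*} [AddCommMonoid M] (f : ι × ι → M)
    (hf : ∀ q, f q.swap = f q) :
    2 • ∑ q with q.1 < q.2, f q + ∑ r, f (r, r) = ∑ q, f q := by
  have hgt : ∑ q with q.2 < q.1, f q = ∑ q with q.1 < q.2, f q :=
    Finset.sum_equiv (Equiv.prodComm ι ι) (by simp) (fun q _ => (hf q).symm)
  have hdiag : ∑ q with q.1 = q.2, f q = ∑ r, f (r, r) := by
    refine Finset.sum_nbij' Prod.fst (fun r => (r, r)) ?_ ?_ ?_ ?_ ?_ <;>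
      simp +contextual [Prod.ext_iff, eq_comm]
  have hge : ∑ q with ¬q.1 < q.2, f q = ∑ q with q.2 < q.1, f q + ∑ q with q.1 = q.2, f q := by
    rw [← sum_union (disjoint_filter.2 fun q _ h h' => h.ne' h'), ← filter_or]
    exact sum_congr (filter_congr fun q _ => by rw [not_lt, le_iff_lt_or_eq, eq_comm])
      fun _ _ => rfl
  rw [← sum_filter_add_sum_filter_not univ (fun q : ι × ι => q.1 < q.2), hge, hgt, hdiag,
    two_nsmul, add_assoc]

theorem sum_filter_lt_vecMulVec_single_add_single {R : Type*} [Field R] [CharZero R] :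
    ∑ q ∈ univ.filter (fun q : ι × ι => q.1 < q.2),
        vecMulVec (Pi.single q.1 1 + Pi.single q.2 1 : ι → R) (Pi.single q.1 1 + Pi.single q.2 1)
      = ((Fintype.card ι : R) - 2) • (1 : Matrix ι ι R) + vecMulVec 1 1 := by
  set v : ι × ι → ι → R := fun q => Pi.single q.1 1 + Pi.single q.2 1
  have hall : ∑ q, vecMulVec (v q) (v q)
      = (2 * Fintype.card ι : R) • (1 : Matrix ι ι R) + (2 : R) • vecMulVec 1 1 := by
    ext i j
    by_cases h : i = j <;>
      simp [v, h, Fintype.sum_prod_type, Matrix.sum_apply, vecMulVec_apply, Pi.single_apply,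
        one_apply, mul_add, sum_add_distrib] <;> ring
  have hdiag : ∑ r, vecMulVec (v (r, r)) (v (r, r)) = (4 : R) • (1 : Matrix ι ι R) := by
    ext i j
    by_cases h : i = j <;>
      norm_num [v, h, Matrix.sum_apply, vecMulVec_apply, Pi.single_apply, one_apply, ← two_mul]
  have h := two_nsmul_sum_filter_lt_add_sum_diag (fun q => vecMulVec (v q) (v q))
    (fun q => by simp only [v, Prod.fst_swap, Prod.snd_swap, add_comm])
  rw [hall, hdiag] at h
  refine smul_right_injective _ (two_ne_zero (α := R)) ?_
  linear_combination (norm := module) h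

theorem sum_filter_lt_smul_one_sub_smul_vecMulVec {R : Type*} [Field R] [CharZero R] (a c : R) :
    ∑ q ∈ univ.filter (fun q : ι × ι => q.1 < q.2),
        (a • (1 : Matrix ι ι R)
          - c • vecMulVec (Pi.single q.1 1 + Pi.single q.2 1) (Pi.single q.1 1 + Pi.single q.2 1))
      = ((Fintype.card ι).choose 2 * a - c * (Fintype.card ι - 2)) • 1 - c • vecMulVec 1 1 := by
  rw [sum_sub_distrib, sum_const, ← smul_sum, sum_filter_lt_vecMulVec_single_add_single,
    ← Nat.cast_smul_eq_nsmul R, Fintype.card_product_filter_lt]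
  match_scalars <;> ring

theorem sum_filter_lt_log_det_two_smul_one_sub_smul_vecMulVec {c : ℝ} (hc : c < 1) :
    ∑ q ∈ univ.filter (fun q : ι × ι => q.1 < q.2),
        Real.log ((2 : ℝ) • (1 : Matrix ι ι ℝ)
          - c • vecMulVec (Pi.single q.1 1 + Pi.single q.2 1)
              (Pi.single q.1 1 + Pi.single q.2 1)).det
      = (Fintype.card ι).choose 2 * (Fintype.card ι * Real.log 2 + Real.log (1 - c)) := by
  rw [sum_congr rfl fun q hq => by
      rw [det_two_smul_one_sub_smul_vecMulVec_single_add_single c (mem_filter.1 hq).2.ne,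
        Real.log_mul (by positivity) (by linarith), Real.log_pow],
    sum_const, nsmul_eq_mul, Fintype.card_product_filter_lt]

theorem log_det_one_div_choose_two_smul_sum_filter_lt_le (hι : 2 ≤ Fintype.card ι) {c : ℝ}
    (hc : c < 1) :
    Real.log ((1 / ((Fintype.card ι).choose 2 : ℝ)) •
        ∑ q ∈ univ.filter (fun q : ι × ι => q.1 < q.2),
        ((2 : ℝ) • (1 : Matrix ι ι ℝ)
          - c • vecMulVec (Pi.single q.1 1 + Pi.single q.2 1)
              (Pi.single q.1 1 + Pi.single q.2 1))).det
      ≤ Fintype.card ι * Real.log 2 - c := by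
  rw [sum_filter_lt_smul_one_sub_smul_vecMulVec, smul_sub, smul_smul, smul_smul,
    Nat.cast_choose_two]
  set N := Fintype.card ι
  have : Nonempty ι := Fintype.card_pos_iff.1 (by omega)
  have hN : (2 : ℝ) ≤ N := by exact_mod_cast hι
  have hN1 : 0 < (N : ℝ) - 1 := by linarith
  have hdot : (1 : ι → ℝ) ⬝ᵥ 1 = N := by simp [N]
  refine (log_det_smul_one_sub_smul_vecMulVec_le 1 ?_ ?_ two_pos).trans_eq ?_
  · field_simp
    nlinarith
  · rw [hdot]
    field_simp
    nlinarith
  · rw [hdot]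
    field_simp
    ring

end Pairs

theorem stmt6_general (p : ℕ) (hp : 2 ≤ p) (ρ : ℝ) (hρ0 : 0 < ρ) :
    let pairs : Finset (Fin p × Fin p) := Finset.univ.filter (fun q => q.1 < q.2)
    let M : ℝ := (p.choose 2 : ℝ)
    let v : Fin p × Fin p → (Fin p → ℝ) := fun q => Pi.single q.1 1 + Pi.single q.2 1
    let S : Fin p × Fin p → Matrix (Fin p) (Fin p) ℝ := fun q =>
      (2 : ℝ) • (1 : Matrix (Fin p) (Fin p) ℝ)
        - (2 * ρ / (1 + 4 * ρ)) • Matrix.vecMulVec (v q) (v q)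
    let Sbar : Matrix (Fin p) (Fin p) ℝ := (1 / M) • ∑ q ∈ pairs, S q
    Real.log Sbar.det - (1 / M) * ∑ q ∈ pairs, Real.log (S q).det ≤ 16 * ρ ^ 2 := by
  intro pairs M v S Sbar
  set c := 2 * ρ / (1 + 4 * ρ) with hc
  have hc1 : c < 1 / 2 := by rw [hc, div_lt_iff₀ (by positivity)]; linarith
  have hc2 : c ≤ 2 * ρ := by rw [hc, div_le_iff₀ (by positivity)]; nlinarith
  have hc0 : 0 < c := by positivity
  have hM : M ≠ 0 := Nat.cast_ne_zero.2 (Nat.choose_pos hp).ne'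
  have hlogSbar := log_det_one_div_choose_two_smul_sum_filter_lt_le (ι := Fin p) (by simpa)
    (c := c) (by linarith)
  have hlogS := sum_filter_lt_log_det_two_smul_one_sub_smul_vecMulVec (ι := Fin p) (c := c)
    (by linarith)
  simp only [Fintype.card_fin] at hlogSbar hlogS
  have hsq : c ^ 2 / (1 - c) ≤ 16 * ρ ^ 2 := by
    rw [div_le_iff₀ (by linarith)]
    nlinarith [mul_le_mul hc2 hc2 hc0.le (by positivity)]
  rw [hlogS, ← mul_assoc, one_div_mul_cancel hM, one_mul]
  linarith [Real.neg_sub_log_one_sub_le (x := c) (by linarith)]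

/-- Key single-sample bound (33): for the ensemble `S_q = 2I - (2ρ/(1+4ρ)) v_q v_qᵀ`,
`v_q = e_r + e_{r'}` ranging over all `M = C(p,2)` pairs `r < r'`, and
`S̄ = (1/M) Σ S_q`, we have `log det S̄ - (1/M) Σ log det S_q ≤ 16 ρ²`. -/
theorem stmt6 (p : ℕ) (hp : 2 ≤ p) (ρ : ℝ) (hρ0 : 0 < ρ) (hρ1 : ρ ≤ 1/4) :
    let pairs : Finset (Fin p × Fin p) := Finset.univ.filter (fun q => q.1 < q.2)
    let M : ℝ := (p.choose 2 : ℝ)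
    let v : Fin p × Fin p → (Fin p → ℝ) := fun q => Pi.single q.1 1 + Pi.single q.2 1
    let S : Fin p × Fin p → Matrix (Fin p) (Fin p) ℝ := fun q =>
      (2 : ℝ) • (1 : Matrix (Fin p) (Fin p) ℝ)
        - (2 * ρ / (1 + 4 * ρ)) • Matrix.vecMulVec (v q) (v q)
    let Sbar : Matrix (Fin p) (Fin p) ℝ := (1 / M) • ∑ q ∈ pairs, S q
    Real.log Sbar.det - (1 / M) * ∑ q ∈ pairs, Real.log (S q).det ≤ 16 * ρ ^ 2 :=
  stmt6_general p hp ρ hρ0
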